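/- For every finite simple subcubic graph G of odd order n, R(G) ≤ 1; that is, |λ_{(n+1)/2}(G)| ≤ 1. -/

import Mathlib

open SimpleGraph Matrix

theorem adjMatrix_isHermitian {V : Type} [Fintype V] [DecidableEq V]
    (G : SimpleGraph V) [DecidableRel G.Adj] : (G.adjMatrix ℝ).IsHermitian := by
  ext i j
  simp [Matrix.conjTranspose_apply, SimpleGraph.adj_comm]

/-- Multiset of adjacency eigenvalues. -/
noncomputable def adjSpectrum {V : Type} [Fintype V] [DecidableEq V]
    (G : SimpleGraph V) [DecidableRel G.Adj] : Multiset ℝ :=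
  Finset.univ.val.map (adjMatrix_isHermitian G).eigenvalues

/-- the i-th largest adjacency eigenvalue (1-indexed). -/
noncomputable def eigval {V : Type} [Fintype V] [DecidableEq V]
    (G : SimpleGraph V) [DecidableRel G.Adj] (i : ℕ) : ℝ :=
  ((adjSpectrum G).sort (· ≤ ·)).getD (Fintype.card V - i) 0

/-!
A maximum cut of a subcubic graph leaves every vertex with at most one neighbour on its own
side, so the larger side `S` has at least `(n + 1) / 2` vertices and induces a matching. On
vectors supported on `S` the quadratic form of the adjacency matrix is therefore bounded by
`x ⬝ᵥ x` in absolute value. A subspace of dimension `d` on which `x ⬝ᵥ A *ᵥ x ≤ κ * (x ⬝ᵥ x)`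
leaves room for at most `n - d` eigenvalues above `κ` (and symmetrically below), so at most
`(n - 1) / 2` eigenvalues lie above `1` and at most `(n - 1) / 2` below `-1`; the median
eigenvalue lies in `[-1, 1]`.
-/

open Finset Module

theorem Module.Basis.finrank_le_card_nonpos_of_sum_mul_sq_nonpos {𝕜 E ι : Type*} [Field 𝕜]
    [LinearOrder 𝕜] [IsStrictOrderedRing 𝕜] [AddCommGroup E] [Module 𝕜 E] [Fintype ι]
    (b : Basis ι 𝕜 E) (μ : ι → 𝕜) (W : Submodule 𝕜 E)
    (hW : ∀ x ∈ W, ∑ i, μ i * b.repr x i ^ 2 ≤ 0) :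
    finrank 𝕜 W ≤ #{i | μ i ≤ 0} := by
  classical
  have : FiniteDimensional 𝕜 E := b.finiteDimensional_of_finite
  set Q : Finset ι := {i | μ i ≤ 0}
  by_contra! hlt
  let coeffsOnQ : W →ₗ[𝕜] (Q → 𝕜) :=
    LinearMap.funLeft 𝕜 𝕜 ((↑) : Q → ι) ∘ₗ Finsupp.lcoeFun ∘ₗ b.repr.toLinearMap ∘ₗ W.subtype
  obtain ⟨⟨x, hxW⟩, hker, hx0⟩ := Submodule.exists_mem_ne_zero_of_ne_bot
    (LinearMap.ker_ne_bot_of_finrank_lt (f := coeffsOnQ) (by simpa using hlt))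
  have hvanish : ∀ i ∈ Q, b.repr x i = 0 := fun i hi => congrFun hker ⟨i, hi⟩
  obtain ⟨i₀, hi₀⟩ : ∃ i, b.repr x i ≠ 0 :=
    Finsupp.ne_iff.1 ((b.repr.map_ne_zero_iff).2 fun h => hx0 (Subtype.ext h))
  have hterm : ∀ i, 0 ≤ μ i * b.repr x i ^ 2 := fun i => by
    by_cases hi : μ i ≤ 0
    · simp [hvanish i (by simpa [Q] using hi)]
    · exact mul_nonneg (not_le.1 hi).le (sq_nonneg _)
  have hpos : 0 < μ i₀ * b.repr x i₀ ^ 2 := by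
    have : 0 < μ i₀ := not_le.1 fun h => hi₀ (hvanish i₀ (by simpa [Q] using h))
    positivity
  exact (hW x hxW).not_gt (sum_pos' (fun i _ => hterm i) ⟨i₀, mem_univ _, hpos⟩)

namespace Matrix.IsHermitian

variable {n : Type*} [Fintype n] [DecidableEq n] {A : Matrix n n ℝ} (hA : A.IsHermitian)

noncomputable def eigenvectorBasisFun : Basis n ℝ (n → ℝ) :=
  hA.eigenvectorBasis.toBasis.map (WithLp.linearEquiv 2 ℝ (n → ℝ))

theorem eigenvectorBasisFun_repr_apply (x : n → ℝ) (i : n) :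
    hA.eigenvectorBasisFun.repr x i = inner ℝ (hA.eigenvectorBasis i) (WithLp.toLp 2 x) := by
  simp [eigenvectorBasisFun, OrthonormalBasis.repr_apply_apply]

theorem dotProduct_self_eq_sum_sq (x : n → ℝ) :
    x ⬝ᵥ x = ∑ i, hA.eigenvectorBasisFun.repr x i ^ 2 := by
  calc x ⬝ᵥ x = inner ℝ (WithLp.toLp 2 x) (WithLp.toLp 2 x) := by
        rw [EuclideanSpace.inner_eq_star_dotProduct, star_trivial]
    _ = _ := by
        rw [← hA.eigenvectorBasis.sum_inner_mul_inner]
        refine sum_congr rfl fun i _ => ?_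
        rw [real_inner_comm, eigenvectorBasisFun_repr_apply, sq]

theorem dotProduct_mulVec_eq_sum (x : n → ℝ) :
    x ⬝ᵥ A *ᵥ x = ∑ i, hA.eigenvalues i * hA.eigenvectorBasisFun.repr x i ^ 2 := by
  set b := hA.eigenvectorBasis
  have hAT : Aᵀ = A := by simpa [conjTranspose_eq_transpose_of_trivial] using hA.eq
  have hcoeff : ∀ i, inner ℝ (b i) (WithLp.toLp 2 (A *ᵥ x)) =
      hA.eigenvalues i * inner ℝ (b i) (WithLp.toLp 2 x) := by
    intro i
    simp only [EuclideanSpace.inner_eq_star_dotProduct, star_trivial]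
    rw [dotProduct_comm, dotProduct_mulVec, ← mulVec_transpose, hAT, hA.mulVec_eigenvectorBasis,
      smul_dotProduct, smul_eq_mul, dotProduct_comm]
  calc x ⬝ᵥ A *ᵥ x = inner ℝ (WithLp.toLp 2 x) (WithLp.toLp 2 (A *ᵥ x)) := by
        rw [EuclideanSpace.inner_eq_star_dotProduct, star_trivial, dotProduct_comm]
    _ = _ := by
        rw [← b.sum_inner_mul_inner]
        refine sum_congr rfl fun i _ => ?_
        rw [hcoeff, real_inner_comm, eigenvectorBasisFun_repr_apply]
        ring

theorem card_lt_eigenvalues_add_finrank_le (κ : ℝ) (W : Submodule ℝ (n → ℝ))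
    (hW : ∀ x ∈ W, x ⬝ᵥ A *ᵥ x ≤ κ * (x ⬝ᵥ x)) :
    #{i | κ < hA.eigenvalues i} + finrank ℝ W ≤ Fintype.card n := by
  have hle := hA.eigenvectorBasisFun.finrank_le_card_nonpos_of_sum_mul_sq_nonpos
    (fun i => hA.eigenvalues i - κ) W fun x hx => by
      have := hW x hx
      rw [hA.dotProduct_mulVec_eq_sum, hA.dotProduct_self_eq_sum_sq, mul_sum] at this
      simpa only [sub_mul, sum_sub_distrib, sub_nonpos] using this
  have hsplit := card_filter_add_card_filter_not (s := univ) (κ < hA.eigenvalues ·)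
  simp only [sub_nonpos, not_lt, card_univ] at hle hsplit
  omega

theorem card_eigenvalues_lt_add_finrank_le (κ : ℝ) (W : Submodule ℝ (n → ℝ))
    (hW : ∀ x ∈ W, κ * (x ⬝ᵥ x) ≤ x ⬝ᵥ A *ᵥ x) :
    #{i | hA.eigenvalues i < κ} + finrank ℝ W ≤ Fintype.card n := by
  have hle := hA.eigenvectorBasisFun.finrank_le_card_nonpos_of_sum_mul_sq_nonpos
    (fun i => κ - hA.eigenvalues i) W fun x hx => by
      have := hW x hx
      rw [hA.dotProduct_mulVec_eq_sum, hA.dotProduct_self_eq_sum_sq, mul_sum] at this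
      simpa only [sub_mul, sum_sub_distrib, sub_nonpos] using this
  have hsplit := card_filter_add_card_filter_not (s := univ) (hA.eigenvalues · < κ)
  simp only [sub_nonpos, not_lt, card_univ] at hle hsplit
  omega

end Matrix.IsHermitian

def vanishingOutside {ι : Type*} (R : Type*) [Semiring R] (S : Finset ι) : Submodule R (ι → R) :=
  ⨅ i ∈ (↑S : Set ι)ᶜ, LinearMap.ker (LinearMap.proj i : (ι → R) →ₗ[R] R)

theorem mem_vanishingOutside {ι R : Type*} [Semiring R] {S : Finset ι} {x : ι → R} :
    x ∈ vanishingOutside R S ↔ ∀ i ∉ S, x i = 0 := by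
  simp [vanishingOutside, Submodule.mem_iInf]

theorem finrank_vanishingOutside {ι R : Type*} [Fintype ι] [Ring R] [StrongRankCondition R]
    (S : Finset ι) : finrank R (vanishingOutside R S) = #S := by
  classical
  rw [vanishingOutside, (LinearMap.iInfKerProjEquiv R (fun _ : ι => R) (I := ↑S)
    disjoint_compl_right (by simp)).finrank_eq]
  simp

theorem Matrix.add_single_dotProduct_mulVec_add_single {n R : Type*} [Fintype n] [DecidableEq n]
    [CommRing R] {A : Matrix n n R} (hA : A.IsSymm) (x : n → R) (v : n) (c : R) :
    (x + Pi.single v c) ⬝ᵥ A *ᵥ (x + Pi.single v c) =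
      x ⬝ᵥ A *ᵥ x + 2 * c * (A *ᵥ x) v + c ^ 2 * A v v := by
  have hcross : x ⬝ᵥ A *ᵥ Pi.single v c = (A *ᵥ x) v * c := by
    rw [dotProduct_mulVec, ← mulVec_transpose, hA.eq, dotProduct_single]
  simp only [mulVec_add, add_dotProduct, dotProduct_add, hcross, single_dotProduct]
  simp [mulVec_single, mul_comm]
  ring

theorem Matrix.abs_dotProduct_mulVec_le_of_sum_abs_le {n : Type*} [Fintype n] {A : Matrix n n ℝ}
    (hA : A.IsSymm) {S : Finset n} {d : ℝ} (hd : ∀ v ∈ S, ∑ w ∈ S, |A v w| ≤ d) {x : n → ℝ}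
    (hx : ∀ v ∉ S, x v = 0) : |x ⬝ᵥ A *ᵥ x| ≤ d * (x ⬝ᵥ x) := by
  have hrestrict : ∀ f : n → ℝ, (∀ v ∉ S, f v = 0) → ∑ v, f v = ∑ v ∈ S, f v :=
    fun f hf => (sum_subset (subset_univ S) fun v _ hv => hf v hv).symm
  have hform : x ⬝ᵥ A *ᵥ x = ∑ v ∈ S, ∑ w ∈ S, x v * A v w * x w := by
    rw [dotProduct, hrestrict _ fun v hv => by simp [hx v hv]]
    refine sum_congr rfl fun v _ => ?_
    rw [mulVec, dotProduct, hrestrict _ fun w hw => by simp [hx w hw], mul_sum]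
    simp only [mul_assoc]
  have hnorm : x ⬝ᵥ x = ∑ v ∈ S, x v ^ 2 := by
    rw [dotProduct, hrestrict _ fun v hv => by simp [hx v hv]]
    simp only [sq]
  set T := ∑ v ∈ S, ∑ w ∈ S, |A v w| * x v ^ 2
  have hT : T ≤ d * ∑ v ∈ S, x v ^ 2 := by
    rw [mul_sum]
    refine sum_le_sum fun v hv => ?_
    rw [← sum_mul]
    exact mul_le_mul_of_nonneg_right (hd v hv) (sq_nonneg _)
  have hT_symm : ∑ v ∈ S, ∑ w ∈ S, |A v w| * x w ^ 2 = T := by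
    rw [sum_comm]
    simp only [hA.apply]
    rfl
  calc |x ⬝ᵥ A *ᵥ x| ≤ ∑ v ∈ S, ∑ w ∈ S, |x v * A v w * x w| := by
        rw [hform]
        exact (abs_sum_le_sum_abs _ _).trans (sum_le_sum fun v _ => abs_sum_le_sum_abs _ _)
    _ ≤ ∑ v ∈ S, ∑ w ∈ S, (|A v w| * x v ^ 2 + |A v w| * x w ^ 2) / 2 := by
        refine sum_le_sum fun v _ => sum_le_sum fun w _ => ?_
        rw [abs_mul, abs_mul, ← sq_abs (x v), ← sq_abs (x w)]
        nlinarith [abs_nonneg (A v w), sq_nonneg (|x v| - |x w|)]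
    _ = T := by simp only [← sum_div, sum_add_distrib, hT_symm]; ring
    _ ≤ d * (x ⬝ᵥ x) := hnorm ▸ hT

theorem SimpleGraph.exists_finset_two_mul_card_neighbors_same_side_le_degree {V : Type*}
    [Fintype V] [DecidableEq V] (G : SimpleGraph V) [DecidableRel G.Adj] :
    ∃ M : Finset V, ∀ v, 2 * #{w ∈ G.neighborFinset v | w ∈ M ↔ v ∈ M} ≤ G.degree v := by
  let σ : Finset V → V → ℝ := fun M v => if v ∈ M then 1 else -1
  -- twice the number of uncut edges minus twice the number of cut edges
  let energy : Finset V → ℝ := fun M => σ M ⬝ᵥ G.adjMatrix ℝ *ᵥ σ M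
  obtain ⟨M, -, hM⟩ := exists_min_image univ energy univ_nonempty
  refine ⟨M, fun v => ?_⟩
  have hflip : σ (symmDiff M {v}) = σ M + Pi.single v (-2 * σ M v) := by
    ext w
    by_cases hw : w = v
    · subst hw; by_cases w ∈ M <;> simp [σ, Finset.mem_symmDiff, *] <;> norm_num
    · simp [σ, hw, Finset.mem_symmDiff]
  have hlocal : σ M v * (G.adjMatrix ℝ *ᵥ σ M) v ≤ 0 := by
    have := hM (symmDiff M {v}) (mem_univ _)
    simp only [energy, hflip, add_single_dotProduct_mulVec_add_single (G.isSymm_adjMatrix),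
      adjMatrix_apply, G.irrefl, if_false] at this
    linarith
  have hcount : σ M v * (G.adjMatrix ℝ *ᵥ σ M) v =
      2 * #{w ∈ G.neighborFinset v | w ∈ M ↔ v ∈ M} - G.degree v := by
    have hsign : ∀ w, σ M v * σ M w = if w ∈ M ↔ v ∈ M then 1 else -1 := by
      intro w; by_cases hv : v ∈ M <;> by_cases hw : w ∈ M <;> simp [σ, hv, hw]
    rw [adjMatrix_mulVec_apply, mul_sum, sum_congr rfl fun w _ => hsign w, sum_ite, sum_const,
      sum_const, ← card_neighborFinset_eq_degree,
      ← card_filter_add_card_filter_not (s := G.neighborFinset v) (fun w => w ∈ M ↔ v ∈ M)]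
    simp only [nsmul_eq_mul, Nat.cast_add]
    ring
  have : (2 * #{w ∈ G.neighborFinset v | w ∈ M ↔ v ∈ M} : ℝ) ≤ G.degree v := by linarith
  exact_mod_cast this

theorem SimpleGraph.exists_finset_card_ge_forall_card_adj_le_one {V : Type*} [Fintype V]
    [DecidableEq V] (G : SimpleGraph V) [DecidableRel G.Adj] (hdeg : ∀ v, G.degree v ≤ 3) :
    ∃ S : Finset V, Fintype.card V ≤ 2 * #S ∧ ∀ v ∈ S, #{w ∈ S | G.Adj v w} ≤ 1 := by
  obtain ⟨M, hM⟩ := G.exists_finset_two_mul_card_neighbors_same_side_le_degree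
  have hside : ∀ T : Finset V, (∀ v ∈ T, ∀ w, (w ∈ M ↔ v ∈ M) ↔ w ∈ T) →
      ∀ v ∈ T, #{w ∈ T | G.Adj v w} ≤ 1 := by
    intro T hT v hv
    have hsub : {w ∈ T | G.Adj v w} ⊆ {w ∈ G.neighborFinset v | w ∈ M ↔ v ∈ M} := by
      intro w hw
      simp only [mem_filter, mem_neighborFinset] at hw ⊢
      exact ⟨hw.2, (hT v hv w).2 hw.1⟩
    have := card_le_card hsub
    have := hM v
    have := hdeg v
    omega
  have hcompl := card_add_card_compl M
  by_cases hbig : Fintype.card V ≤ 2 * #M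
  · exact ⟨M, hbig, hside M fun v hv w => by simp [hv]⟩
  · exact ⟨Mᶜ, by omega, hside Mᶜ fun v hv w => by simp_all⟩

theorem SimpleGraph.abs_dotProduct_adjMatrix_mulVec_le {V : Type*} [Fintype V]
    (G : SimpleGraph V) [DecidableRel G.Adj] {S : Finset V} {d : ℕ}
    (hS : ∀ v ∈ S, #{w ∈ S | G.Adj v w} ≤ d) {x : V → ℝ} (hx : ∀ v ∉ S, x v = 0) :
    |x ⬝ᵥ G.adjMatrix ℝ *ᵥ x| ≤ d * (x ⬝ᵥ x) := by
  refine abs_dotProduct_mulVec_le_of_sum_abs_le G.isSymm_adjMatrix (fun v hv => ?_) hx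
  have : ∑ w ∈ S, |G.adjMatrix ℝ v w| = #{w ∈ S | G.Adj v w} := by
    simp [adjMatrix_apply, apply_ite, sum_boole]
  rw [this]
  exact_mod_cast hS v hv

theorem List.Pairwise.getElem_le_of_countP_lt {α : Type*} [LinearOrder α] {l : List α}
    (hl : l.Pairwise (· ≤ ·)) {t : ℕ} (ht : t < l.length) {b : α}
    (hcount : l.countP (b < ·) < l.length - t) : l[t] ≤ b := by
  by_contra! h
  have hdrop : l.drop t = l[t] :: l.drop (t + 1) := List.drop_eq_getElem_cons ht
  have hge : ∀ c ∈ l.drop (t + 1), l[t] ≤ c := by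
    have := hl.sublist (List.drop_sublist t l)
    rw [hdrop, List.pairwise_cons] at this
    exact this.1
  have hall : ∀ c ∈ l.drop t, b < c := by
    rw [hdrop]
    rintro c (_ | ⟨_, hc⟩)
    exacts [h, h.trans_le (hge c hc)]
  have : l.length - t ≤ l.countP (b < ·) :=
    calc l.length - t = (l.drop t).countP (b < ·) := by
          rw [List.countP_eq_length.2 (by simpa using hall), List.length_drop]
      _ ≤ l.countP (b < ·) := (List.drop_sublist t l).countP_le
  omega

theorem List.Pairwise.le_getElem_of_countP_le {α : Type*} [LinearOrder α] {l : List α}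
    (hl : l.Pairwise (· ≤ ·)) {t : ℕ} (ht : t < l.length) {a : α}
    (hcount : l.countP (· < a) ≤ t) : a ≤ l[t] := by
  by_contra! h
  have htake : l.take (t + 1) = l.take t ++ [l[t]] := List.take_succ_eq_append_getElem ht
  have hle : ∀ c ∈ l.take t, c ≤ l[t] := by
    have := hl.sublist (List.take_sublist (t + 1) l)
    rw [htake, List.pairwise_append] at this
    exact fun c hc => this.2.2 c hc _ (List.mem_singleton_self _)
  have hall : ∀ c ∈ l.take (t + 1), c < a := by
    rw [htake]
    intro c hc
    rcases List.mem_append.1 hc with hc | hc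
    exacts [(hle c hc).trans_lt h, (List.mem_singleton.1 hc) ▸ h]
  have : t + 1 ≤ l.countP (· < a) :=
    calc t + 1 = (l.take (t + 1)).countP (· < a) := by
          rw [List.countP_eq_length.2 (by simpa using hall), List.length_take]; omega
      _ ≤ l.countP (· < a) := (List.take_sublist (t + 1) l).countP_le
  omega

theorem countP_sort_adjSpectrum {V : Type} [Fintype V] [DecidableEq V]
    (G : SimpleGraph V) [DecidableRel G.Adj] (p : ℝ → Prop) [DecidablePred p] :
    ((adjSpectrum G).sort (· ≤ ·)).countP (p ·) =
      #{i | p ((adjMatrix_isHermitian G).eigenvalues i)} := by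
  rw [← Multiset.coe_countP, Multiset.sort_eq, adjSpectrum, Multiset.countP_map, card, filter_val]

theorem length_sort_adjSpectrum {V : Type} [Fintype V] [DecidableEq V]
    (G : SimpleGraph V) [DecidableRel G.Adj] :
    ((adjSpectrum G).sort (· ≤ ·)).length = Fintype.card V := by
  simp [adjSpectrum]

theorem hl_index_le_one_of_odd_order_subcubic
    {V : Type} [Fintype V] [DecidableEq V]
    (G : SimpleGraph V) [DecidableRel G.Adj]
    (hdeg : ∀ v : V, G.degree v ≤ 3)
    (hodd : Odd (Fintype.card V)) :
    |eigval G ((Fintype.card V + 1) / 2)| ≤ 1 := by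
  obtain ⟨t, ht⟩ := hodd
  obtain ⟨S, hS_card, hS_adj⟩ := G.exists_finset_card_ge_forall_card_adj_le_one hdeg
  have hform : ∀ x ∈ vanishingOutside ℝ S, |x ⬝ᵥ G.adjMatrix ℝ *ᵥ x| ≤ x ⬝ᵥ x := fun x hx => by
    simpa using G.abs_dotProduct_adjMatrix_mulVec_le hS_adj (mem_vanishingOutside.1 hx)
  have hgt := (adjMatrix_isHermitian G).card_lt_eigenvalues_add_finrank_le 1 _
    fun x hx => by linarith [(abs_le.1 (hform x hx)).2]
  have hlt := (adjMatrix_isHermitian G).card_eigenvalues_lt_add_finrank_le (-1) _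
    fun x hx => by linarith [(abs_le.1 (hform x hx)).1]
  rw [finrank_vanishingOutside] at hgt hlt
  set l := (adjSpectrum G).sort (· ≤ ·) with hl
  have hlen : l.length = 2 * t + 1 := ht ▸ length_sort_adjSpectrum G
  have hsorted : l.Pairwise (· ≤ ·) := Multiset.pairwise_sort _ _
  have htl : t < l.length := by omega
  have hmid : eigval G ((Fintype.card V + 1) / 2) = l[t] := by
    rw [eigval, ← hl, ht, show 2 * t + 1 - (2 * t + 1 + 1) / 2 = t by omega]
    exact List.getD_eq_getElem l 0 htl
  rw [hmid, abs_le]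
  constructor
  · refine hsorted.le_getElem_of_countP_le htl ?_
    rw [countP_sort_adjSpectrum G (· < -1)]
    omega
  · refine hsorted.getElem_le_of_countP_lt htl ?_
    rw [countP_sort_adjSpectrum G (1 < ·)]
    omega
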